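/- The solution space of the system (i)-(ii) above (edge equations and triangle equations on ℝ^{3m}) is an affine subspace of dimension exactly m/2 + 1, and after imposing the additional holonomy equation ᵗT_γ θ = K (a nontrivial linear functional on this solution space), the solution space has dimension m/2. -/

import Mathlib

open Finset Real

/-- A combinatorial triangulation `O = (V, E, F)` of the torus with `m`
triangles. `Cor` is the set of the `3m` corners of triangles; `tri j` is the
triangle containing the corner `j`, `vert j` its vertex, `opp j` the edge of
its triangle opposite to it; `nxt` is the counterclockwise next corner inside
each triangle (a fixed-point free rotation of order 3 on each fiber of `tri`);
`sgm j` is the other corner opposite to the same edge `opp j`, in the triangle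
adjacent across that edge.  The cardinality axioms encode `|F| = m`,
`2|E| = 3m`, `2|V| = m` (so `χ = V - E + F = 0`, as for the torus), and the
last axiom says that the two endpoints of an edge (namely the vertices of the
two other corners of an adjacent triangle) do not depend, as an unordered
pair, on the side from which they are computed. -/
structure TorusTriangulation (Cor F E V : Type*)
    [Fintype Cor] [DecidableEq Cor] [Fintype F] [DecidableEq F]
    [Fintype E] [DecidableEq E] [Fintype V] [DecidableEq V] where
  m : ℕ
  hm : 0 < m
  tri : Cor → F
  vert : Cor → V
  opp : Cor → E
  nxt : Cor → Cor
  sgm : Cor → Cor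
  card_cor : Fintype.card Cor = 3 * m
  card_faces : Fintype.card F = m
  card_edges : 2 * Fintype.card E = 3 * m
  card_verts : 2 * Fintype.card V = m
  tri_nxt : ∀ j, tri (nxt j) = tri j
  nxt_nxt_nxt : ∀ j, nxt (nxt (nxt j)) = j
  nxt_ne : ∀ j, nxt j ≠ j
  tri_fiber : ∀ j k, tri j = tri k → k = j ∨ k = nxt j ∨ k = nxt (nxt j)
  sgm_sgm : ∀ j, sgm (sgm j) = j
  sgm_ne : ∀ j, sgm j ≠ j
  opp_sgm : ∀ j, opp (sgm j) = opp j
  opp_fiber : ∀ j k, opp j = opp k → k = j ∨ k = sgm j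
  opp_surj : Function.Surjective opp
  endpoints_sgm : ∀ j, ({vert (nxt j), vert (nxt (nxt j))} : Multiset V) =
    {vert (nxt (sgm j)), vert (nxt (nxt (sgm j)))}

variable {Cor F E V : Type*}
    [Fintype Cor] [DecidableEq Cor] [Fintype F] [DecidableEq F]
    [Fintype E] [DecidableEq E] [Fintype V] [DecidableEq V]

/-!
Write the edge and triangle equations as `A θ = r` for the corner–edge/corner–triangle
incidence matrix `A : Matrix (E ⊕ F) Cor ℝ`. A vector `(λ, μ)` in the kernel of `Aᵀ` satisfies
`λ (opp j) + μ (tri j) = 0` at every corner `j`; comparing the two corners opposite to an edge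
shows that `μ` takes the same value on adjacent triangles, so by connectivity of the dual graph
`(λ, μ)` is a multiple of `(1, -1)`. Hence `rank A = |E| + |F| - 1`, and the kernel of `A` has
dimension `3m - 3m/2 - m + 1 = |V| + 1`. The range of `A` is then the hyperplane orthogonal to
`(1, -1)`, which contains `r = (π - α, π)` because each `α e` occurs four times in the vertex
conditions, whence `∑ α = π |V|`. A functional that is nonzero on the kernel cuts it down by one
dimension, and takes any value along a particular solution moved within the kernel.
-/

open Matrix

namespace Matrix

variable {K m n : Type*} [Field K] [Fintype m] [Fintype n]
  {A : Matrix m n K} {c : m → K}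

theorem rank_add_one_of_ker_transpose_eq_span (hc : c ≠ 0)
    (hker : LinearMap.ker Aᵀ.mulVecLin = Submodule.span K {c}) :
    A.rank + 1 = Fintype.card m := by
  rw [← rank_transpose, ← finrank_span_singleton (K := K) hc, ← hker, rank,
    LinearMap.finrank_range_add_finrank_ker, Module.finrank_fintype_fun_eq_card]

theorem finrank_ker_mulVecLin_add_card_of_ker_transpose_eq_span (hc : c ≠ 0)
    (hker : LinearMap.ker Aᵀ.mulVecLin = Submodule.span K {c}) :
    Module.finrank K (LinearMap.ker A.mulVecLin) + Fintype.card m = Fintype.card n + 1 := by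
  have hrank := rank_add_one_of_ker_transpose_eq_span hc hker
  have hnullity := LinearMap.finrank_range_add_finrank_ker A.mulVecLin
  rw [Module.finrank_fintype_fun_eq_card, ← rank] at hnullity
  omega

theorem exists_mulVec_eq_of_dotProduct_eq_zero (hc : c ≠ 0)
    (hker : LinearMap.ker Aᵀ.mulVecLin = Submodule.span K {c}) {w : m → K} (hw : c ⬝ᵥ w = 0) :
    ∃ v, A *ᵥ v = w := by
  classical
  set ψ : Module.Dual K (m → K) := dotProductEquiv K m c
  have hψ : ψ ≠ 0 := (LinearEquiv.map_ne_zero_iff _).mpr hc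
  have hcA : c ᵥ* A = 0 := by
    simpa [← hker] using Submodule.mem_span_singleton_self (R := K) c
  have hle : LinearMap.range A.mulVecLin ≤ LinearMap.ker ψ := by
    rintro _ ⟨v, rfl⟩
    simp [ψ, dotProduct_mulVec, hcA]
  have hrange : LinearMap.range A.mulVecLin = LinearMap.ker ψ := by
    refine Submodule.eq_of_le_of_finrank_eq hle ?_
    have hrank := rank_add_one_of_ker_transpose_eq_span hc hker
    have hkerψ := Module.Dual.finrank_ker_add_one_of_ne_zero hψ
    rw [Module.finrank_fintype_fun_eq_card] at hkerψ
    rw [← rank]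
    omega
  have hwψ : w ∈ LinearMap.ker ψ := by simpa [ψ] using hw
  exact hrange.ge hwψ

end Matrix

theorem Submodule.finrank_inf_ker_add_one {K M : Type*} [Field K] [AddCommGroup M] [Module K M]
    (D : Submodule K M) [FiniteDimensional K D] (h : M →ₗ[K] K) (hD : ∃ v ∈ D, h v ≠ 0) :
    Module.finrank K ↥(D ⊓ LinearMap.ker h) + 1 = Module.finrank K D := by
  obtain ⟨v, hvD, hv⟩ := hD
  have hne : h.domRestrict D ≠ 0 := fun h0 => hv (by simpa using LinearMap.congr_fun h0 ⟨v, hvD⟩)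
  rw [← Module.Dual.finrank_ker_add_one_of_ne_zero hne, LinearMap.ker_domRestrict,
    ← Submodule.map_comap_subtype, Submodule.finrank_map_subtype_eq]

namespace TorusTriangulation

variable (T : TorusTriangulation Cor F E V)

def DualConnected : Prop :=
  ∀ f f' : F, Relation.ReflTransGen (fun g g' => ∃ j, T.tri j = g ∧ T.tri (T.sgm j) = g') f f'

theorem nxt_bijective : Function.Bijective T.nxt :=
  Function.bijective_iff_has_inverse.mpr
    ⟨T.nxt ∘ T.nxt, T.nxt_nxt_nxt, T.nxt_nxt_nxt⟩

theorem nxt_nxt_ne (j : Cor) : T.nxt (T.nxt j) ≠ j := fun h =>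
  T.nxt_ne j (by simpa [h] using (T.nxt_nxt_nxt (T.nxt j)).symm)

theorem nonempty_cor (T : TorusTriangulation Cor F E V) : Nonempty Cor :=
  Fintype.card_pos_iff.mp (by rw [T.card_cor]; exact Nat.mul_pos three_pos T.hm)

theorem filter_opp_eq (j : Cor) : ({k | T.opp k = T.opp j} : Finset Cor) = {j, T.sgm j} := by
  ext k
  simp only [mem_filter, mem_univ, true_and, mem_insert, mem_singleton]
  refine ⟨fun hk => T.opp_fiber j k hk.symm, ?_⟩
  rintro (rfl | rfl)
  exacts [rfl, T.opp_sgm j]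

theorem filter_tri_eq (j : Cor) :
    ({k | T.tri k = T.tri j} : Finset Cor) = {j, T.nxt j, T.nxt (T.nxt j)} := by
  ext k
  simp only [mem_filter, mem_univ, true_and, mem_insert, mem_singleton]
  refine ⟨fun hk => T.tri_fiber j k hk.symm, ?_⟩
  rintro (rfl | rfl | rfl)
  exacts [rfl, T.tri_nxt j, by rw [T.tri_nxt, T.tri_nxt]]

theorem nxt_notMem_pair (j : Cor) : j ∉ ({T.nxt j, T.nxt (T.nxt j)} : Finset Cor) := by
  simp only [mem_insert, mem_singleton, not_or]
  exact ⟨(T.nxt_ne j).symm, (T.nxt_nxt_ne j).symm⟩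

theorem card_filter_tri_eq (j : Cor) : #({k | T.tri k = T.tri j} : Finset Cor) = 3 := by
  rw [filter_tri_eq, card_insert_of_notMem (T.nxt_notMem_pair j),
    card_pair fun h => T.nxt_ne j (T.nxt_bijective.1 h).symm]

theorem tri_surjective : Function.Surjective T.tri := by
  classical
  have hcard : #(univ.image T.tri) * 3 = 3 * T.m := by
    rw [← T.card_cor, ← card_univ, card_eq_sum_card_image T.tri, ← smul_eq_mul,
      ← sum_const]
    refine sum_congr rfl fun f hf => ?_
    obtain ⟨j, -, rfl⟩ := mem_image.mp hf
    exact (T.card_filter_tri_eq j).symm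
  have himage : univ.image T.tri = univ :=
    eq_univ_of_card _ (by rw [T.card_faces]; omega)
  intro f
  obtain ⟨j, -, hj⟩ := mem_image.mp (himage.symm ▸ mem_univ f)
  exact ⟨j, hj⟩

theorem sum_comp_opp (g : E → ℝ) : ∑ j, g (T.opp j) = 2 * ∑ e, g e := by
  rw [sum_comp, image_univ_of_surjective T.opp_surj, mul_sum]
  refine sum_congr rfl fun e _ => ?_
  obtain ⟨j, rfl⟩ := T.opp_surj e
  rw [filter_opp_eq, card_pair (T.sgm_ne j).symm, two_smul, two_mul]

theorem sum_weights_eq (α : E → ℝ)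
    (hvert : ∀ v : V, ∑ j ∈ univ.filter (fun j => T.vert j = v),
      (α (T.opp (T.nxt j)) + α (T.opp (T.nxt (T.nxt j)))) = 4 * π) :
    ∑ e, α e = Fintype.card V * π := by
  have htotal := Finset.sum_congr rfl fun v (_ : v ∈ univ) => hvert v
  rw [sum_fiberwise, sum_add_distrib, T.nxt_bijective.sum_comp fun j => α (T.opp (T.nxt j)),
    T.nxt_bijective.sum_comp fun j => α (T.opp j), sum_comp_opp,
    sum_const, card_univ, nsmul_eq_mul] at htotal
  linarith

def incidenceMatrix : Matrix (E ⊕ F) Cor ℝ :=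
  Matrix.fromRows (.of fun e j => if T.opp j = e then 1 else 0)
    (.of fun f j => if T.tri j = f then 1 else 0)

theorem incidenceMatrix_transpose_mulVec (w : E ⊕ F → ℝ) (j : Cor) :
    ((T.incidenceMatrix)ᵀ *ᵥ w) j = w (.inl (T.opp j)) + w (.inr (T.tri j)) := by
  simp [incidenceMatrix, Matrix.mulVec, dotProduct, Fintype.sum_sum_type]

theorem incidenceMatrix_mulVec_inl (θ : Cor → ℝ) (j : Cor) :
    (T.incidenceMatrix *ᵥ θ) (.inl (T.opp j)) = θ j + θ (T.sgm j) := by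
  simp only [incidenceMatrix, Matrix.mulVec, dotProduct, Matrix.fromRows_apply_inl,
    Matrix.of_apply, ite_mul, one_mul, zero_mul]
  rw [← sum_filter, filter_opp_eq, sum_pair (T.sgm_ne j).symm]

theorem incidenceMatrix_mulVec_inr (θ : Cor → ℝ) (j : Cor) :
    (T.incidenceMatrix *ᵥ θ) (.inr (T.tri j)) = θ j + θ (T.nxt j) + θ (T.nxt (T.nxt j)) := by
  simp only [incidenceMatrix, Matrix.mulVec, dotProduct, Matrix.fromRows_apply_inr,
    Matrix.of_apply, ite_mul, one_mul, zero_mul]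
  rw [← sum_filter, filter_tri_eq, sum_insert (T.nxt_notMem_pair j),
    sum_pair fun h => T.nxt_ne j (T.nxt_bijective.1 h).symm, add_assoc]

theorem incidenceMatrix_mulVec_eq_sumElim_iff (θ : Cor → ℝ) (a : E → ℝ) (b : F → ℝ) :
    T.incidenceMatrix *ᵥ θ = Sum.elim a b ↔
      (∀ j, θ j + θ (T.sgm j) = a (T.opp j)) ∧
      (∀ j, θ j + θ (T.nxt j) + θ (T.nxt (T.nxt j)) = b (T.tri j)) := by
  rw [funext_iff, Sum.forall, T.opp_surj.forall, T.tri_surjective.forall]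
  simp only [incidenceMatrix_mulVec_inl, incidenceMatrix_mulVec_inr, Sum.elim_inl, Sum.elim_inr]

theorem ker_incidenceMatrix_transpose
    (hconn : T.DualConnected) :
    LinearMap.ker (T.incidenceMatrix)ᵀ.mulVecLin = Submodule.span ℝ {Sum.elim (1 : E → ℝ) (-1)} := by
  refine le_antisymm (fun w hw => ?_) ?_
  · have hrow (j : Cor) : w (.inl (T.opp j)) + w (.inr (T.tri j)) = 0 := by
      rw [← T.incidenceMatrix_transpose_mulVec]
      exact congr_fun hw j
    have hstep (j : Cor) : w (.inr (T.tri j)) = w (.inr (T.tri (T.sgm j))) := by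
      linarith [hrow j, T.opp_sgm j ▸ hrow (T.sgm j)]
    obtain ⟨j₀⟩ := T.nonempty_cor
    have hconst (f : F) : w (.inr f) = w (.inr (T.tri j₀)) := by
      induction hconn (T.tri j₀) f with
      | refl => rfl
      | tail _ hgg' ih =>
        obtain ⟨j, rfl, rfl⟩ := hgg'
        rw [← hstep, ih]
    refine Submodule.mem_span_singleton.mpr ⟨-w (.inr (T.tri j₀)), funext ?_⟩
    rintro (e | f)
    · obtain ⟨j, rfl⟩ := T.opp_surj e
      simp only [Pi.smul_apply, Sum.elim_inl, Pi.one_apply, smul_eq_mul, mul_one]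
      linarith [hrow j, hconst (T.tri j)]
    · simp [hconst f]
  · rw [Submodule.span_singleton_le_iff_mem, LinearMap.mem_ker]
    funext j
    rw [Matrix.mulVecLin_apply, T.incidenceMatrix_transpose_mulVec]
    simp

theorem sumElim_one_neg_one_ne_zero (T : TorusTriangulation Cor F E V) :
    Sum.elim (1 : E → ℝ) (-1 : F → ℝ) ≠ 0 := by
  obtain ⟨j⟩ := T.nonempty_cor
  exact Function.ne_iff.mpr ⟨.inl (T.opp j), by simp⟩

theorem finrank_ker_incidenceMatrix
    (hconn : T.DualConnected) :
    Module.finrank ℝ (LinearMap.ker T.incidenceMatrix.mulVecLin) = Fintype.card V + 1 := by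
  have h := Matrix.finrank_ker_mulVecLin_add_card_of_ker_transpose_eq_span
    T.sumElim_one_neg_one_ne_zero (T.ker_incidenceMatrix_transpose hconn)
  have := T.card_cor; have := T.card_edges; have := T.card_faces; have := T.card_verts
  rw [Fintype.card_sum] at h
  omega

theorem exists_incidenceMatrix_mulVec_eq (α : E → ℝ)
    (hconn : T.DualConnected)
    (hvert : ∀ v : V, ∑ j ∈ univ.filter (fun j => T.vert j = v),
      (α (T.opp (T.nxt j)) + α (T.opp (T.nxt (T.nxt j)))) = 4 * π) :
    ∃ θ, T.incidenceMatrix *ᵥ θ = Sum.elim (fun e => π - α e) fun _ => π := by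
  refine Matrix.exists_mulVec_eq_of_dotProduct_eq_zero T.sumElim_one_neg_one_ne_zero
    (T.ker_incidenceMatrix_transpose hconn) ?_
  have := T.card_edges; have := T.card_faces; have := T.card_verts
  have hEF : (Fintype.card E : ℝ) = Fintype.card F + Fintype.card V := by norm_cast; omega
  simp only [dotProduct, Fintype.sum_sum_type, Sum.elim_inl, Sum.elim_inr, Pi.one_apply,
    Pi.neg_apply, one_mul, neg_one_mul, sum_neg_distrib, sum_sub_distrib, sum_const, card_univ,
    nsmul_eq_mul, T.sum_weights_eq α hvert, hEF]
  ring

end TorusTriangulation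

/-- Dimension count for the linear system `Σ`: assuming the dual graph is
connected and the `α`-weights around every vertex sum to `2π` (doubled count
`4π` below), the solution space of the edge equations (i) and triangle
equations (ii) is a nonempty affine subspace of `ℝ^{3m}` whose direction `D`
(the space of homogeneous solutions) has dimension exactly
`m/2 + 1 = |V| + 1`; and after imposing one further holonomy equation
`h(θ) = K` for a linear functional `h` not vanishing identically on `D`, the
solutions still exist and the direction `D' = D ∩ ker h` has dimension
`m/2 = |V|`. -/
theorem solution_space_dimension (T : TorusTriangulation Cor F E V)
    (α : E → ℝ)
    (hconn : ∀ f f' : F, Relation.ReflTransGen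
      (fun g g' => ∃ j, T.tri j = g ∧ T.tri (T.sgm j) = g') f f')
    (hvert : ∀ v : V,
      ∑ j ∈ Finset.univ.filter (fun j => T.vert j = v),
        (α (T.opp (T.nxt j)) + α (T.opp (T.nxt (T.nxt j)))) = 4 * π)
    (D : Submodule ℝ (Cor → ℝ))
    (hD : ∀ v : Cor → ℝ, v ∈ D ↔
      ((∀ j, v j + v (T.sgm j) = 0) ∧
       (∀ j, v j + v (T.nxt j) + v (T.nxt (T.nxt j)) = 0))) :
    (∃ θ : Cor → ℝ, (∀ j, θ j + θ (T.sgm j) = π - α (T.opp j)) ∧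
        (∀ j, θ j + θ (T.nxt j) + θ (T.nxt (T.nxt j)) = π)) ∧
    Module.finrank ℝ D = Fintype.card V + 1 ∧
    ∀ h : (Cor → ℝ) →ₗ[ℝ] ℝ, (∃ v ∈ D, h v ≠ 0) → ∀ K : ℝ,
      (∃ θ : Cor → ℝ, (∀ j, θ j + θ (T.sgm j) = π - α (T.opp j)) ∧
          (∀ j, θ j + θ (T.nxt j) + θ (T.nxt (T.nxt j)) = π) ∧ h θ = K) ∧
      ∀ D' : Submodule ℝ (Cor → ℝ), (∀ v, v ∈ D' ↔ v ∈ D ∧ h v = 0) →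
        Module.finrank ℝ D' = Fintype.card V := by
  have hDker : D = LinearMap.ker T.incidenceMatrix.mulVecLin := by
    ext v
    rw [hD, LinearMap.mem_ker, Matrix.mulVecLin_apply, ← Sum.elim_zero_zero,
      T.incidenceMatrix_mulVec_eq_sumElim_iff]
    rfl
  have hdim : Module.finrank ℝ D = Fintype.card V + 1 :=
    hDker ▸ T.finrank_ker_incidenceMatrix hconn
  obtain ⟨θ₀, hθ₀⟩ := T.exists_incidenceMatrix_mulVec_eq α hconn hvert
  have hsol (θ : Cor → ℝ) (hθ : T.incidenceMatrix *ᵥ θ = T.incidenceMatrix *ᵥ θ₀) :=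
    (T.incidenceMatrix_mulVec_eq_sumElim_iff θ _ _).mp (hθ.trans hθ₀)
  refine ⟨⟨θ₀, hsol θ₀ rfl⟩, hdim, fun h ⟨v, hvD, hv⟩ K => ⟨?_, fun D' hD' => ?_⟩⟩
  · set θ := θ₀ + ((K - h θ₀) / h v) • v
    have hvker : T.incidenceMatrix *ᵥ v = 0 := by rwa [hDker] at hvD
    obtain ⟨hedge, htri⟩ := hsol θ (by simp [θ, Matrix.mulVec_add, Matrix.mulVec_smul, hvker])
    refine ⟨θ, hedge, htri, ?_⟩
    simp only [θ, map_add, map_smul, smul_eq_mul]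
    field_simp
    ring
  · obtain rfl : D' = D ⊓ LinearMap.ker h := by ext; simp [hD']
    have := D.finrank_inf_ker_add_one h ⟨v, hvD, hv⟩
    omega
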